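/- (Uniform Boundedness Principle for multipolynomials) Let E₁, …, E_m be Banach spaces, F a normed space, and {P_i}_{i∈I} a family of continuous (n₁, …, n_m)-homogeneous polynomials from E₁ × ⋯ × E_m to F. If for every x ∈ E₁ × ⋯ × E_m we have sup_{i∈I} ‖P_i(x)‖ < ∞, then sup_{i∈I} ‖P_i‖ < ∞. -/

import Mathlib

/-!
Baire's theorem, applied to the closed sets `{x | ∀ i, ‖P i x‖ ≤ N}`, gives a polyball
`∏ₖ B(aₖ, r)` on which the family is uniformly bounded. To move the bound to the unit polyball,
replace one coordinate at a time: if `f(z) = A(z, …, z)` with `A` `d`-linear, then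
`t ↦ f(a + t u)` is a polynomial of degree `≤ d` with leading coefficient `f(u)`, so its `d`-th
forward difference at `0` is `d! f(u) = ∑ₖ (-1)^(d-k) (d choose k) f(a + k u)`. If the points
`a + k u` (`k ≤ d`) lie in `B(a, r)` this bounds `d! ‖f(u)‖` by `2^d N`, and homogeneity rescales
`u` to the unit ball.
-/

/-- `P : E₁ × ⋯ × E_m → F` is an `(n₁, …, n_m)`-homogeneous polynomial
(multipolynomial): separately, in each variable `i`, it is an `n i`-homogeneous
polynomial, i.e. the diagonal of some `n i`-linear map. -/
def IsMultiPoly {m : ℕ} {E : Fin m → Type*} [∀ i, NormedAddCommGroup (E i)]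
    [∀ i, NormedSpace ℝ (E i)] {F : Type*} [NormedAddCommGroup F] [NormedSpace ℝ F]
    (n : Fin m → ℕ) (P : (∀ i, E i) → F) : Prop :=
  ∀ (i : Fin m) (x : ∀ i, E i), ∃ A : MultilinearMap ℝ (fun _ : Fin (n i) => E i) F,
    ∀ y : E i, P (Function.update x i y) = A (fun _ => y)

open Finset Function fwdDiff
open scoped Nat

theorem fwdDiff_iter_smul_const {M R G : Type*} [AddCommMonoid M] [Ring R] [AddCommGroup G]
    [Module R G] (h : M) (f : M → R) (v : G) (n : ℕ) :
    (Δ_[h])^[n] (fun x ↦ f x • v) = fun x ↦ (Δ_[h])^[n] f x • v := by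
  induction n with
  | zero => rfl
  | succ n ih => rw [iterate_succ_apply', ih, fwdDiff_smul_const, iterate_succ_apply']; rfl

namespace MultilinearMap

variable {R M N : Type*} [CommRing R] [AddCommGroup M] [Module R M] [AddCommGroup N] [Module R N]

theorem diag_add_smul_eq_sum {d : ℕ} (A : MultilinearMap R (fun _ : Fin d ↦ M) N) (a u : M)
    (t : R) :
    A (fun _ ↦ a + t • u) =
      ∑ T : Finset (Fin d), t ^ #T • A (T.piecewise (fun _ ↦ u) (fun _ ↦ a)) := by
  have hsplit : (fun _ : Fin d ↦ a + t • u) = (fun _ ↦ t • u) + (fun _ ↦ a) :=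
    funext fun _ ↦ add_comm _ _
  rw [hsplit, A.map_add_univ]
  refine sum_congr rfl fun T _ ↦ ?_
  rw [← prod_const, ← A.map_piecewise_smul]
  congr 1
  ext i
  by_cases hi : i ∈ T <;> simp [hi]

theorem fwdDiff_iter_diag_add_smul {d : ℕ} (A : MultilinearMap R (fun _ : Fin d ↦ M) N) (a u : M) :
    (Δ_[1])^[d] (fun t : R ↦ A (fun _ ↦ a + t • u)) = fun _ ↦ d ! • A (fun _ ↦ u) := by
  funext x
  simp_rw [diag_add_smul_eq_sum]
  rw [← sum_fn, fwdDiff_iter_finsetSum, Finset.sum_apply, sum_eq_single univ]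
  · rw [fwdDiff_iter_smul_const, card_univ, Fintype.card_fin, fwdDiff_iter_eq_factorial]
    simp [Nat.cast_smul_eq_nsmul]
  · intro T _ hT
    rw [fwdDiff_iter_smul_const, fwdDiff_iter_pow_eq_zero_of_lt]
    · exact zero_smul R _
    simpa using (card_lt_iff_ne_univ T).mpr hT
  · simp

variable {E F : Type*} [NormedAddCommGroup E] [NormedSpace ℝ E] [NormedAddCommGroup F]
  [NormedSpace ℝ F]

theorem factorial_mul_norm_diag_le {d : ℕ} (A : MultilinearMap ℝ (fun _ : Fin d ↦ E) F)
    (a u : E) {N : ℝ} (hN : ∀ k ≤ d, ‖A (fun _ ↦ a + (k : ℝ) • u)‖ ≤ N) :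
    d ! * ‖A (fun _ ↦ u)‖ ≤ 2 ^ d * N := by
  have hdiff := congrFun (A.fwdDiff_iter_diag_add_smul a u) 0
  rw [fwdDiff_iter_eq_sum_shift] at hdiff
  calc (d ! : ℝ) * ‖A (fun _ ↦ u)‖
      = ‖d ! • A (fun _ ↦ u)‖ := by rw [← Nat.cast_smul_eq_nsmul ℝ, norm_smul, Real.norm_natCast]
    _ ≤ ∑ k ∈ Finset.range (d + 1), (d.choose k : ℝ) * N := by
      rw [← hdiff]
      refine norm_sum_le_of_le _ fun k hk ↦ ?_
      rw [norm_zsmul ℝ]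
      gcongr
      · simp
      · simpa using hN k (Nat.lt_succ_iff.mp (mem_range.mp hk))
    _ = 2 ^ d * N := by
      rw [← sum_mul, ← Nat.cast_sum, Nat.sum_range_choose, Nat.cast_pow, Nat.cast_ofNat]

theorem norm_diag_le_of_forall_closedBall {d : ℕ} (A : MultilinearMap ℝ (fun _ : Fin d ↦ E) F)
    {a : E} {r N : ℝ} (hr : 0 < r) (hN : ∀ z ∈ Metric.closedBall a r, ‖A (fun _ ↦ z)‖ ≤ N)
    {y : E} (hy : ‖y‖ ≤ 1) :
    ‖A (fun _ ↦ y)‖ ≤ (2 * (d + 1) / r) ^ d / d ! * N := by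
  set t := r / (d + 1) with ht
  have ht_pos : 0 < t := by positivity
  have hscale : A (fun _ ↦ t • y) = t ^ d • A (fun _ ↦ y) := by
    simpa using A.map_smul_univ (fun _ ↦ t) (fun _ ↦ y)
  have key := A.factorial_mul_norm_diag_le a (t • y) fun k hk ↦ hN _ <| by
    rw [Metric.mem_closedBall, dist_eq_norm, add_sub_cancel_left, norm_smul, norm_smul,
      Real.norm_natCast, Real.norm_of_nonneg ht_pos.le]
    calc k * (t * ‖y‖) ≤ (d + 1) * (t * 1) := by gcongr; norm_cast; omega
      _ = r := by rw [ht]; field_simp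
  rw [hscale, norm_smul, Real.norm_of_nonneg (by positivity)] at key
  have hrt : (2 * (d + 1) / r) ^ d = 2 ^ d / t ^ d := by rw [ht, ← div_pow]; congr 1; field_simp
  rw [hrt, div_div, div_mul_eq_mul_div, le_div_iff₀ (by positivity)]
  linarith

end MultilinearMap

theorem IsMultiPoly.norm_le_of_forall_closedBall {m : ℕ} {E : Fin m → Type*}
    [∀ i, NormedAddCommGroup (E i)] [∀ i, NormedSpace ℝ (E i)] {F : Type*}
    [NormedAddCommGroup F] [NormedSpace ℝ F] {n : Fin m → ℕ} {Q : (∀ i, E i) → F}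
    (hQ : IsMultiPoly n Q) {a : ∀ i, E i} {r N : ℝ} (hr : 0 < r)
    (hN : ∀ x ∈ Metric.closedBall a r, ‖Q x‖ ≤ N) {x : ∀ i, E i} (hx : ∀ k, ‖x k‖ ≤ 1) :
    ‖Q x‖ ≤ (∏ k, (2 * (n k + 1) / r) ^ n k / (n k)!) * N := by
  suffices H : ∀ s : Finset (Fin m), ∀ x : ∀ i, E i, (∀ k ∈ s, ‖x k‖ ≤ 1) →
      (∀ k ∉ s, ‖x k - a k‖ ≤ r) → ‖Q x‖ ≤ (∏ k ∈ s, (2 * (n k + 1) / r) ^ n k / (n k)!) * N from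
    H univ x (fun k _ ↦ hx k) (fun k hk ↦ absurd (mem_univ k) hk)
  intro s
  induction s using Finset.induction_on with
  | empty =>
    intro x _ hfar
    rw [prod_empty, one_mul]
    refine hN x ((dist_pi_le_iff hr.le).2 fun k ↦ ?_)
    exact (dist_eq_norm _ _).trans_le (hfar k (notMem_empty k))
  | @insert j s hj IH =>
    intro x hnear hfar
    obtain ⟨A, hA⟩ := hQ j x
    have hline : ∀ z ∈ Metric.closedBall (a j) r,
        ‖A (fun _ ↦ z)‖ ≤ (∏ k ∈ s, (2 * (n k + 1) / r) ^ n k / (n k)!) * N := by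
      intro z hz
      rw [← hA]
      refine IH _ (fun k hk ↦ ?_) (fun k hk ↦ ?_)
      · rw [update_of_ne (ne_of_mem_of_not_mem hk hj)]
        exact hnear k (mem_insert_of_mem hk)
      · rcases eq_or_ne k j with rfl | hkj
        · simpa [dist_eq_norm] using hz
        · rw [update_of_ne hkj]
          exact hfar k (by simp [hkj, hk])
    have := A.norm_diag_le_of_forall_closedBall hr hline (hnear j (mem_insert_self j s))
    rw [prod_insert hj, mul_assoc, ← update_eq_self j x, hA]
    exact this

theorem exists_closedBall_forall_norm_le {X I F : Type*} [PseudoMetricSpace X] [BaireSpace X]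
    [Nonempty X] [SeminormedAddCommGroup F] {f : I → X → F} (hf : ∀ i, Continuous (f i))
    (hbdd : ∀ x, ∃ C, ∀ i, ‖f i x‖ ≤ C) :
    ∃ a : X, ∃ r > 0, ∃ N : ℝ, ∀ i, ∀ x ∈ Metric.closedBall a r, ‖f i x‖ ≤ N := by
  let S : ℕ → Set X := fun N ↦ {x | ∀ i, ‖f i x‖ ≤ N}
  have hclosed : ∀ N, IsClosed (S N) := fun N ↦ by
    simp only [S, Set.ofPred_forall]
    exact isClosed_iInter fun i ↦ isClosed_le (hf i).norm continuous_const
  have hcover : ⋃ N, S N = Set.univ := Set.eq_univ_of_forall fun x ↦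
    let ⟨C, hC⟩ := hbdd x
    Set.mem_iUnion.2 ⟨⌈C⌉₊, fun i ↦ (hC i).trans (Nat.le_ceil C)⟩
  obtain ⟨N, a, ha⟩ := nonempty_interior_of_iUnion_of_closed hclosed hcover
  obtain ⟨r, hr, hball⟩ := Metric.nhds_basis_closedBall.mem_iff.1 (mem_interior_iff_mem_nhds.1 ha)
  exact ⟨a, r, hr, N, fun i x hx ↦ hball hx i⟩

/-- Uniform Boundedness Principle for multipolynomials. -/
theorem stmt8 {m : ℕ} {E : Fin m → Type*} [∀ i, NormedAddCommGroup (E i)]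
    [∀ i, NormedSpace ℝ (E i)] [∀ i, CompleteSpace (E i)]
    {F : Type*} [NormedAddCommGroup F] [NormedSpace ℝ F]
    (n : Fin m → ℕ) {I : Type*} (P : I → (∀ i, E i) → F)
    (hpoly : ∀ i, IsMultiPoly n (P i)) (hcont : ∀ i, Continuous (P i))
    (hptwise : ∀ x : ∀ i, E i, ∃ Cx : ℝ, ∀ i, ‖P i x‖ ≤ Cx) :
    ∃ C : ℝ, ∀ i, ∀ x : ∀ i, E i, (∀ k, ‖x k‖ ≤ 1) → ‖P i x‖ ≤ C := by
  obtain ⟨a, r, hr, N, hN⟩ := exists_closedBall_forall_norm_le hcont hptwise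
  exact ⟨_, fun i x hx ↦ (hpoly i).norm_le_of_forall_closedBall hr (hN i) hx⟩
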